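/- For every positive integer n and every complex number z, ∑_{k=0}^{n} (-1)^k · 2^{2k} · (4k+1) · C(4n+1,4k+1) · E_{4k}(z) = ∑_{k=0}^{n-1} (-1)^k · 2^{2k+1} · C(4n+1,4k+2) · B_{4k+2}(z) + ∑_{k=0}^{n} (-1)^k · 2^{2k} · C(4n+1,4k) · B_{4k}(z), where C(n,k) denotes the binomial coefficient. -/

import Mathlib

/-!
For `p = B` and `p = E` the addition formula `p_N(x + y) = ∑ₘ C(N,m) p_m(x) y^(N-m)` gives
`∑ₘ C(N,m) p_m(z) ζ^m = ζ^N p_N(z + ζ⁻¹)`. Splitting the exponents `m` by residue mod 4 and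
evaluating at the four roots `ζ = ±1 ± i` of `ζ⁴ = -4` isolates the sums over `m ≡ 0` and
`m ≡ 2 (mod 4)` weighted by `(-4)^k`, which are what both sides of the identity are made of
(on the left after `(4k+1) C(4n+1,4k+1) = (4n+1) C(4n,4k)`). The four points `z + ζ⁻¹` are
`w₁ + 1, w₁, w₂, w₂ + 1` with `w₁ = z - (1+i)/2`, `w₂ = z - (1-i)/2`, so the difference equations
`B_N(w+1) - B_N(w) = N w^(N-1)` and `E_N(w+1) + E_N(w) = 2 w^N` evaluate both sides to
`(4n+1) (-4)^n / 2 · (w₁^(4n) + w₂^(4n))`.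
-/

open Finset

/-- The Bernoulli polynomial `B_n` evaluated at a complex number `z`,
with generating function `t·e^{zt}/(e^t−1) = ∑_{n≥0} B_n(z)·t^n/n!`. -/
noncomputable def bernoulliPoly (n : ℕ) (z : ℂ) : ℂ :=
  Polynomial.aeval z (Polynomial.bernoulli n)

/-- The Euler polynomial `E_n` evaluated at a complex number `z`,
with generating function `2·e^{zt}/(e^t+1) = ∑_{n≥0} E_n(z)·t^n/n!`,
given by the explicit formula `E_n(z) = ∑_{k=0}^n 2^{-k} ∑_{j=0}^k (-1)^j C(k,j)(z+j)^n`. -/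
noncomputable def eulerPoly (n : ℕ) (z : ℂ) : ℂ :=
  ∑ k ∈ range (n + 1), (1 / 2 ^ k : ℂ) *
    ∑ j ∈ range (k + 1), (-1) ^ j * (k.choose j : ℂ) * (z + j) ^ n

theorem sum_choose_mul_mul_add_pow {R : Type*} [CommSemiring R] (a : ℕ → R) (N : ℕ) (x y : R) :
    ∑ i ∈ range (N + 1), (N.choose i : R) * a i * (x + y) ^ (N - i) =
      ∑ m ∈ range (N + 1),
        N.choose m * (∑ i ∈ range (m + 1), (m.choose i : R) * a i * x ^ (m - i)) * y ^ (N - m) := by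
  set g : ℕ → ℕ → R := fun i j =>
    N.choose (i + j) * ((i + j).choose i * a i * x ^ j) * y ^ (N - (i + j))
  calc _ = ∑ i ∈ range (N + 1), ∑ j ∈ range (N + 1 - i), g i j := by
        refine sum_congr rfl fun i hi => ?_
        rw [add_pow, mul_sum, ← Nat.sub_add_comm (Nat.lt_succ_iff.mp (mem_range.mp hi))]
        refine sum_congr rfl fun j _ => ?_
        have hchoose : ((N.choose (i + j) : R) * (i + j).choose i) =
            N.choose i * (N - i).choose j := by
          have := Nat.choose_mul (n := N) (Nat.le_add_right i j)
          rw [Nat.add_sub_cancel_left] at this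
          simpa only [Nat.cast_mul] using congrArg (Nat.cast : ℕ → R) this
        calc _ = ((N.choose i : R) * (N - i).choose j) * (a i * x ^ j * y ^ (N - (i + j))) := by
              rw [Nat.sub_add_eq]; ring
          _ = g i j := by rw [← hchoose]; ring
    _ = ∑ m ∈ range (N + 1), ∑ k ∈ range (m + 1), g k (m - k) := (sum_range_diag_flip _ g).symm
    _ = _ := by
        simp_rw [mul_sum, sum_mul]
        refine sum_congr rfl fun m _ => sum_congr rfl fun k hk => ?_
        simp only [g, Nat.add_sub_cancel' (Nat.lt_succ_iff.mp (mem_range.mp hk))]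

theorem sum_choose_mul_pow_eq_pow_mul_add_inv {K : Type*} [Field K] {p : ℕ → K → K} {N : ℕ}
    (hp : ∀ x y, p N (x + y) = ∑ m ∈ range (N + 1), (N.choose m : K) * p m x * y ^ (N - m))
    (x : K) {ζ : K} (hζ : ζ ≠ 0) :
    ∑ m ∈ range (N + 1), (N.choose m : K) * p m x * ζ ^ m = ζ ^ N * p N (x + ζ⁻¹) := by
  rw [hp, mul_sum]
  refine sum_congr rfl fun m hm => ?_
  rw [← Nat.sub_add_cancel (Nat.lt_succ_iff.mp (mem_range.mp hm)), pow_add, Nat.add_sub_cancel,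
    inv_pow]
  field_simp

theorem sum_range_four_mul_add_one_mul_pow {R : Type*} [CommSemiring R] (f : ℕ → R) (ζ : R)
    (n : ℕ) :
    ∑ m ∈ range (4 * n + 1), f m * ζ ^ m =
      ∑ k ∈ range (n + 1), f (4 * k) * (ζ ^ 4) ^ k
        + ζ * ∑ k ∈ range n, f (4 * k + 1) * (ζ ^ 4) ^ k
        + ζ ^ 2 * ∑ k ∈ range n, f (4 * k + 2) * (ζ ^ 4) ^ k
        + ζ ^ 3 * ∑ k ∈ range n, f (4 * k + 3) * (ζ ^ 4) ^ k := by
  induction n with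
  | zero => simp
  | succ n ih =>
    rw [show 4 * (n + 1) + 1 = 4 * n + 1 + 1 + 1 + 1 + 1 by ring]
    simp only [sum_range_succ _ (4 * n + 1 + 1 + 1 + 1), sum_range_succ _ (4 * n + 1 + 1 + 1),
      sum_range_succ _ (4 * n + 1 + 1), sum_range_succ _ (4 * n + 1), ih]
    rw [sum_range_succ (fun k => f (4 * k) * (ζ ^ 4) ^ k) (n + 1),
      sum_range_succ (fun k => f (4 * k + 1) * (ζ ^ 4) ^ k) n,
      sum_range_succ (fun k => f (4 * k + 2) * (ζ ^ 4) ^ k) n,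
      sum_range_succ (fun k => f (4 * k + 3) * (ζ ^ 4) ^ k) n,
      show 4 * n + 1 + 1 + 1 + 1 = 4 * (n + 1) by ring]
    ring

open Complex in
theorem forall_pow_four_eq_neg_four {P : ℂ → ℂ → Prop} (z : ℂ)
    (h : ∀ ζ w, ζ ^ 4 = -4 → ζ * (w - z) = 1 → P ζ w) :
    P (1 + I) (z - (1 + I) / 2 + 1) ∧ P (-1 + I) (z - (1 + I) / 2) ∧
      P (-1 - I) (z - (1 - I) / 2) ∧ P (1 - I) (z - (1 - I) / 2 + 1) :=
  ⟨h _ _ (by linear_combination (I ^ 2 + 4 * I + 5) * I_sq) (by linear_combination -I_sq / 2),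
    h _ _ (by linear_combination (I ^ 2 - 4 * I + 5) * I_sq) (by linear_combination -I_sq / 2),
    h _ _ (by linear_combination (I ^ 2 + 4 * I + 5) * I_sq) (by linear_combination -I_sq / 2),
    h _ _ (by linear_combination (I ^ 2 - 4 * I + 5) * I_sq) (by linear_combination -I_sq / 2)⟩

theorem bernoulliPoly_eq_sum (n : ℕ) (z : ℂ) :
    bernoulliPoly n z =
      ∑ i ∈ range (n + 1), (n.choose i : ℂ) * (bernoulli i : ℂ) * z ^ (n - i) := by
  simp [bernoulliPoly, Polynomial.bernoulli, map_sum, Polynomial.aeval_monomial, mul_comm]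

theorem bernoulliPoly_add (N : ℕ) (x y : ℂ) :
    bernoulliPoly N (x + y) =
      ∑ m ∈ range (N + 1), (N.choose m : ℂ) * bernoulliPoly m x * y ^ (N - m) := by
  simp_rw [bernoulliPoly_eq_sum]
  exact sum_choose_mul_mul_add_pow _ N x y

theorem bernoulliPoly_add_one (n : ℕ) (z : ℂ) :
    bernoulliPoly n (z + 1) = bernoulliPoly n z + n * z ^ (n - 1) := by
  simpa [bernoulliPoly, Polynomial.aeval_comp, add_comm] using
    congrArg (Polynomial.aeval z) (Polynomial.bernoulli_comp_one_add_X n)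

theorem sum_neg_one_pow_mul_choose_mul_eq_fwdDiff_iter {R : Type*} [CommRing R] (f : R → R)
    (k : ℕ) (z : R) :
    ∑ j ∈ range (k + 1), (-1) ^ j * (k.choose j : R) * f (z + j) =
      (-1) ^ k * (fwdDiff 1)^[k] f z := by
  rw [fwdDiff_iter_eq_sum_shift, mul_sum]
  refine sum_congr rfl fun j hj => ?_
  have hj : j + (k - j) = k := Nat.add_sub_cancel' (Nat.lt_succ_iff.mp (mem_range.mp hj))
  have hsq : ((-1 : R) ^ (k - j)) * (-1) ^ (k - j) = 1 := by rw [← mul_pow]; simp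
  rw [← hj, pow_add, zsmul_eq_mul, nsmul_one, hj]
  push_cast
  linear_combination (-((-1 : R) ^ j * (k.choose j) * f (z + j))) * hsq

theorem eulerPoly_eq_sum_fwdDiff_iter {n K : ℕ} (h : n < K) (z : ℂ) :
    eulerPoly n z = ∑ k ∈ range K, (-1 / 2 : ℂ) ^ k * (fwdDiff 1)^[k] (· ^ n) z := by
  have hK : eulerPoly n z = ∑ k ∈ range (n + 1), (-1 / 2 : ℂ) ^ k * (fwdDiff 1)^[k] (· ^ n) z := by
    refine sum_congr rfl fun k _ => ?_
    rw [sum_neg_one_pow_mul_choose_mul_eq_fwdDiff_iter (· ^ n), div_pow]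
    ring
  rw [hK]
  refine sum_subset (range_subset_range.2 h) fun k _ hk => ?_
  rw [fwdDiff_iter_pow_eq_zero_of_lt (by simpa using hk), Pi.zero_apply, mul_zero]

theorem eulerPoly_add_one_add (n : ℕ) (z : ℂ) :
    eulerPoly n (z + 1) + eulerPoly n z = 2 * z ^ n := by
  set g : ℕ → ℂ := fun k => 2 * (-1 / 2 : ℂ) ^ k * (fwdDiff 1)^[k] (· ^ n) z
  have htelescope (k : ℕ) : (-1 / 2 : ℂ) ^ k * (fwdDiff 1)^[k] (· ^ n) (z + 1)
      + (-1 / 2 : ℂ) ^ k * (fwdDiff 1)^[k] (· ^ n) z = g k - g (k + 1) := by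
    simp only [g, Function.iterate_succ_apply', fwdDiff]
    ring
  rw [eulerPoly_eq_sum_fwdDiff_iter (lt_add_one n), eulerPoly_eq_sum_fwdDiff_iter (lt_add_one n),
    ← sum_add_distrib, sum_congr rfl fun k _ => htelescope k, sum_range_sub']
  simp [g, fwdDiff_iter_pow_eq_zero_of_lt (lt_add_one n)]

theorem eulerPoly_add (N : ℕ) (x y : ℂ) :
    eulerPoly N (x + y) =
      ∑ m ∈ range (N + 1), (N.choose m : ℂ) * eulerPoly m x * y ^ (N - m) := by
  have hshift (k : ℕ) : (fwdDiff 1)^[k] (· ^ N) (x + y) =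
      ∑ m ∈ range (N + 1), (N.choose m * y ^ (N - m)) * (fwdDiff 1)^[k] (· ^ m) x := by
    have hpow : (fun r : ℂ => (r + y) ^ N) =
        ∑ m ∈ range (N + 1), (N.choose m * y ^ (N - m) : ℂ) • fun r : ℂ => r ^ m := by
      ext r
      rw [Finset.sum_apply, add_pow]
      exact sum_congr rfl fun m _ => by simp only [Pi.smul_apply, smul_eq_mul]; ring
    rw [← fwdDiff_iter_comp_add, hpow, fwdDiff_iter_finsetSum, Finset.sum_apply]
    simp only [fwdDiff_iter_const_smul, Pi.smul_apply, smul_eq_mul]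
  rw [eulerPoly_eq_sum_fwdDiff_iter (lt_add_one N)]
  simp_rw [hshift, mul_sum]
  rw [sum_comm]
  refine sum_congr rfl fun m hm => ?_
  rw [eulerPoly_eq_sum_fwdDiff_iter (K := N + 1) (mem_range.mp hm), mul_sum, sum_mul]
  exact sum_congr rfl fun k _ => by ring

open Complex in
theorem sum_choose_four_mul_eulerPoly_mul_neg_four_pow (n : ℕ) (z : ℂ) :
    ∑ k ∈ range (n + 1), ((4 * n).choose (4 * k) : ℂ) * eulerPoly (4 * k) z * (-4) ^ k =
      (-4) ^ n / 2 * ((z - (1 + I) / 2) ^ (4 * n) + (z - (1 - I) / 2) ^ (4 * n)) := by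
  set f : ℕ → ℂ := fun m => ((4 * n).choose m : ℂ) * eulerPoly m z
  change ∑ k ∈ range (n + 1), f (4 * k) * (-4) ^ k = _
  have hroot (ζ w : ℂ) (hζ : ζ ^ 4 = -4) (hw : ζ * (w - z) = 1) :
      ∑ k ∈ range (n + 1), f (4 * k) * (-4) ^ k
        + ζ * ∑ k ∈ range n, f (4 * k + 1) * (-4) ^ k
        + ζ ^ 2 * ∑ k ∈ range n, f (4 * k + 2) * (-4) ^ k
        + ζ ^ 3 * ∑ k ∈ range n, f (4 * k + 3) * (-4) ^ k = (-4) ^ n * eulerPoly (4 * n) w := by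
    have hinv : z + ζ⁻¹ = w := by rw [← eq_inv_of_mul_eq_one_right hw]; ring
    rw [← hζ, ← sum_range_four_mul_add_one_mul_pow, sum_choose_mul_pow_eq_pow_mul_add_inv
      (eulerPoly_add (4 * n)) z (left_ne_zero_of_mul_eq_one hw), hinv, pow_mul]
  obtain ⟨h₁, h₂, h₃, h₄⟩ := forall_pow_four_eq_neg_four z hroot
  have e₁ := eulerPoly_add_one_add (4 * n) (z - (1 + I) / 2)
  have e₂ := eulerPoly_add_one_add (4 * n) (z - (1 - I) / 2)
  linear_combination (norm := ring_nf) (h₁ + h₂ + h₃ + h₄) / 4 + (-4) ^ n / 4 * (e₁ + e₂)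
  simp only [I_sq]
  ring

open Complex in
theorem sum_choose_four_mul_bernoulliPoly_mul_neg_four_pow (n : ℕ) (z : ℂ) :
    ∑ k ∈ range (n + 1), ((4 * n + 1).choose (4 * k) : ℂ) * bernoulliPoly (4 * k) z * (-4) ^ k
      + 2 * ∑ k ∈ range n,
          ((4 * n + 1).choose (4 * k + 2) : ℂ) * bernoulliPoly (4 * k + 2) z * (-4) ^ k =
      (4 * n + 1) * (-4) ^ n / 2 * ((z - (1 + I) / 2) ^ (4 * n) + (z - (1 - I) / 2) ^ (4 * n)) := by
  set f : ℕ → ℂ := fun m => ((4 * n + 1).choose m : ℂ) * bernoulliPoly m z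
  change ∑ k ∈ range (n + 1), f (4 * k) * (-4) ^ k + 2 * ∑ k ∈ range n, f (4 * k + 2) * (-4) ^ k = _
  have hroot (ζ w : ℂ) (hζ : ζ ^ 4 = -4) (hw : ζ * (w - z) = 1) :
      ∑ k ∈ range (n + 1), f (4 * k) * (-4) ^ k
        + ζ * ∑ k ∈ range n, f (4 * k + 1) * (-4) ^ k
        + ζ ^ 2 * ∑ k ∈ range n, f (4 * k + 2) * (-4) ^ k
        + ζ ^ 3 * ∑ k ∈ range n, f (4 * k + 3) * (-4) ^ k + f (4 * n + 1) * ((-4) ^ n * ζ)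
        = (-4) ^ n * ζ * bernoulliPoly (4 * n + 1) w := by
    have hinv : z + ζ⁻¹ = w := by rw [← eq_inv_of_mul_eq_one_right hw]; ring
    have hpow : ζ ^ (4 * n + 1) = (-4) ^ n * ζ := by rw [pow_succ, pow_mul, hζ]
    rw [← hpow, ← hζ, ← sum_range_four_mul_add_one_mul_pow, ← sum_range_succ (fun m => f m * ζ ^ m),
      sum_choose_mul_pow_eq_pow_mul_add_inv (bernoulliPoly_add (4 * n + 1)) z
        (left_ne_zero_of_mul_eq_one hw), hinv]
  obtain ⟨h₁, h₂, h₃, h₄⟩ := forall_pow_four_eq_neg_four z hroot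
  have b₁ := bernoulliPoly_add_one (4 * n + 1) (z - (1 + I) / 2)
  have b₂ := bernoulliPoly_add_one (4 * n + 1) (z - (1 - I) / 2)
  push_cast [Nat.add_sub_cancel] at b₁ b₂
  -- the weights `c_ζ` satisfy `∑ c_ζ ζ^r = 1, 0, 2, 0` for `r = 0, 1, 2, 3`
  linear_combination (norm := ring_nf)
    ((1 - I) * h₁ + (1 + I) * h₂ + (1 - I) * h₃ + (1 + I) * h₄) / 4 + (-4) ^ n / 2 * (b₁ + b₂)
  simp only [I_sq]
  ring

theorem stmt14_general (n : ℕ) (z : ℂ) :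
    ∑ k ∈ range (n + 1), (-1 : ℂ) ^ k * 2 ^ (2 * k) * (4 * (k : ℂ) + 1) *
        ((4 * n + 1).choose (4 * k + 1) : ℂ) * eulerPoly (4 * k) z
      = ∑ k ∈ range n, (-1 : ℂ) ^ k * 2 ^ (2 * k + 1) *
          ((4 * n + 1).choose (4 * k + 2) : ℂ) * bernoulliPoly (4 * k + 2) z
        + ∑ k ∈ range (n + 1), (-1 : ℂ) ^ k * 2 ^ (2 * k) *
          ((4 * n + 1).choose (4 * k) : ℂ) * bernoulliPoly (4 * k) z := by
  have hsign (k : ℕ) : (-1 : ℂ) ^ k * 2 ^ (2 * k) = (-4) ^ k := by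
    rw [pow_mul, ← mul_pow]; norm_num
  have hchoose (k : ℕ) : (4 * (k : ℂ) + 1) * ((4 * n + 1).choose (4 * k + 1) : ℂ) =
      (4 * n + 1) * ((4 * n).choose (4 * k) : ℂ) := by
    exact_mod_cast ((Nat.add_one_mul_choose_eq (4 * n) (4 * k)).trans (mul_comm _ _)).symm
  calc _ = (4 * n + 1) * ∑ k ∈ range (n + 1),
          ((4 * n).choose (4 * k) : ℂ) * eulerPoly (4 * k) z * (-4) ^ k := by
        rw [mul_sum]
        refine sum_congr rfl fun k _ => ?_
        rw [← hsign]
        linear_combination ((-1 : ℂ) ^ k * 2 ^ (2 * k) * eulerPoly (4 * k) z) * hchoose k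
    _ = ∑ k ∈ range (n + 1), ((4 * n + 1).choose (4 * k) : ℂ) * bernoulliPoly (4 * k) z * (-4) ^ k
        + 2 * ∑ k ∈ range n,
          ((4 * n + 1).choose (4 * k + 2) : ℂ) * bernoulliPoly (4 * k + 2) z * (-4) ^ k := by
        rw [sum_choose_four_mul_eulerPoly_mul_neg_four_pow,
          sum_choose_four_mul_bernoulliPoly_mul_neg_four_pow]
        ring
    _ = _ := by
        simp only [mul_sum, ← hsign, pow_succ]
        rw [add_comm]
        congr 1 <;> exact sum_congr rfl fun k _ => by ring

theorem stmt14 (n : ℕ) (hn : 0 < n) (z : ℂ) :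
    ∑ k ∈ range (n + 1), (-1 : ℂ) ^ k * 2 ^ (2 * k) * (4 * (k : ℂ) + 1) *
        ((4 * n + 1).choose (4 * k + 1) : ℂ) * eulerPoly (4 * k) z
      = ∑ k ∈ range n, (-1 : ℂ) ^ k * 2 ^ (2 * k + 1) *
          ((4 * n + 1).choose (4 * k + 2) : ℂ) * bernoulliPoly (4 * k + 2) z
        + ∑ k ∈ range (n + 1), (-1 : ℂ) ^ k * 2 ^ (2 * k) *
          ((4 * n + 1).choose (4 * k) : ℂ) * bernoulliPoly (4 * k) z :=
  stmt14_general n z
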